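/- Let X be a real Banach space that is Hahn-Banach smooth (every norm-one functional in X* has a unique norm-preserving extension to X*** under the canonical embedding). If x ∈ S(X) is a smooth point of X, then x, viewed in X** via the canonical embedding, is a smooth point of X**. -/

import Mathlib

open NormedSpace

/-! A norm-one functional `Λ` on `X**` with `Λ (ĵ x) = 1` restricts along `ĵ` to a norm-one
functional on `X` taking the value `1` at `x`. If `x` is smooth, that restriction is the unique
norming functional `x'` of `x`, so `Λ` is a norm-preserving extension of `x'`; Hahn-Banach
smoothness leaves only one such extension. -/

section NormingFunctional

variable {𝕜 E F : Type*} [NontriviallyNormedField 𝕜] [NormedAddCommGroup E] [NormedSpace 𝕜 E]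
  [NormedAddCommGroup F] [NormedSpace 𝕜 F]

theorem ContinuousLinearMap.norm_eq_one_of_apply_eq_one {f : StrongDual 𝕜 E} {x : E}
    (hf : ‖f‖ ≤ 1) (hx : ‖x‖ ≤ 1) (hfx : f x = 1) : ‖f‖ = 1 := by
  refine le_antisymm hf ?_
  calc (1 : ℝ) = ‖f x‖ := by rw [hfx, norm_one]
    _ ≤ ‖f‖ * ‖x‖ := f.le_opNorm x
    _ ≤ ‖f‖ := mul_le_of_le_one_right (norm_nonneg f) hx

theorem ContinuousLinearMap.norm_comp_eq_one_of_apply_eq_one {Λ : StrongDual 𝕜 F}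
    {T : E →L[𝕜] F} {x : E} (hT : ‖T‖ ≤ 1) (hΛ : ‖Λ‖ ≤ 1) (hx : ‖x‖ ≤ 1) (hΛx : Λ (T x) = 1) :
    ‖Λ.comp T‖ = 1 :=
  norm_eq_one_of_apply_eq_one
    ((Λ.opNorm_comp_le T).trans (mul_le_one₀ hΛ (norm_nonneg T) hT)) hx hΛx

end NormingFunctional

theorem stmt_15 (X : Type*) [NormedAddCommGroup X] [NormedSpace ℝ X]
    (hHBs : ∀ x' : StrongDual ℝ X, ‖x'‖ = 1 →
      ∃! Λ : StrongDual ℝ (StrongDual ℝ (StrongDual ℝ X)), @norm _ (ContinuousLinearMap.hasOpNorm (E := StrongDual ℝ (StrongDual ℝ X)) (F := ℝ) (σ₁₂ := RingHom.id ℝ)) Λ = 1 ∧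
        ∀ x : X, Λ (inclusionInDoubleDual ℝ X x) = x' x)
    (x : X) (hx : ‖x‖ = 1)
    (hsmooth : ∃! x' : StrongDual ℝ X, ‖x'‖ = 1 ∧ x' x = 1) :
    ∃! Λ : StrongDual ℝ (StrongDual ℝ (StrongDual ℝ X)), @norm _ (ContinuousLinearMap.hasOpNorm (E := StrongDual ℝ (StrongDual ℝ X)) (F := ℝ) (σ₁₂ := RingHom.id ℝ)) Λ = 1 ∧ Λ (inclusionInDoubleDual ℝ X x) = 1 := by
  obtain ⟨x', ⟨hx'_norm, hx'x⟩, hx'_unique⟩ := hsmooth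
  obtain ⟨Λ, ⟨hΛ_norm, hΛ_ext⟩, hΛ_unique⟩ := hHBs x' hx'_norm
  refine ⟨Λ, ⟨hΛ_norm, (hΛ_ext x).trans hx'x⟩, fun Λ' ⟨hΛ'_norm, hΛ'x⟩ => ?_⟩
  have hrestrict_norm :=
    ContinuousLinearMap.norm_comp_eq_one_of_apply_eq_one (F := StrongDual ℝ (StrongDual ℝ X))
      (inclusionInDoubleDual_norm_le ℝ X) hΛ'_norm.le hx.le hΛ'x
  have hrestrict : Λ'.comp (inclusionInDoubleDual ℝ X) = x' := hx'_unique _ ⟨hrestrict_norm, hΛ'x⟩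
  exact hΛ_unique Λ' ⟨hΛ'_norm, fun z => by rw [← hrestrict]; rfl⟩
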